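/- Let n ≥ 1, p ≥ 1, and let f : B₂(0) × [0,1] → ℝ be a smooth nonnegative solution of the heat equation ∂f/∂t = Δf on the Euclidean ball B₂(0) ⊂ ℝⁿ. Assume that tᵖ · f(x,t) ≤ 1 for all x ∈ B₁(0) and all t ∈ [0,1], and that (f(x,0) + 1)^{1/p} · (1 − ‖x‖²)² ≤ 2 for all x in the closed ball B̄₁(0). Then there exist constants M = M(n,p) > 0 and c = c(n,p) > 0, depending only on n and p, such that (f(x,t) + 1)^{1/p} · ((1 − ‖x‖²)² − M t) ≤ c for all x ∈ B̄₁(0) and all t ∈ [0,1]. -/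

import Mathlib

open Set Metric

open Filter in

/-- 1D second derivative test at a local max. -/
lemma second_deriv_test {G G' : ℝ → ℝ} {q : ℝ}
    (hG : ∀ᶠ s in nhds (0:ℝ), HasDerivAt G (G' s) s)
    (hG' : HasDerivAt G' q 0) (hmax : IsLocalMax G 0) :
    G' 0 = 0 ∧ q ≤ 0 := by
  have h0 : G' 0 = 0 := by
    have := hmax.deriv_eq_zero
    rwa [hG.self_of_nhds.deriv] at this
  refine ⟨h0, ?_⟩
  by_contra hq
  push_neg at hq
  have hslope : Tendsto (fun s => G' s / s) (nhdsWithin 0 {(0:ℝ)}ᶜ) (nhds q) := by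
    have := hasDerivAt_iff_tendsto_slope.1 hG'
    simpa [slope_fun_def_field, h0] using this
  have hev : ∀ᶠ s in nhdsWithin (0:ℝ) {(0:ℝ)}ᶜ, 0 < G' s / s :=
    hslope.eventually (eventually_gt_nhds hq)
  have hev2 : ∀ᶠ s in nhds (0:ℝ), s ≠ 0 → 0 < G' s / s := by
    simpa [eventually_nhdsWithin_iff] using hev
  obtain ⟨δ, hδ, hball⟩ := Metric.eventually_nhds_iff.mp hev2
  obtain ⟨ε, hε, hball2⟩ := Metric.eventually_nhds_iff.mp hG
  obtain ⟨ρ, hρ, hball3⟩ := Metric.eventually_nhds_iff.mp hmax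
  set r := min δ (min ε ρ) / 2 with hr
  have hrpos : 0 < r := by positivity
  have hrδ : r < δ := by
    have : min δ (min ε ρ) ≤ δ := min_le_left _ _
    nlinarith [hrpos]
  have hrε : r < ε := by
    have : min δ (min ε ρ) ≤ ε := le_trans (min_le_right _ _) (min_le_left _ _)
    nlinarith [hrpos]
  have hrρ : r < ρ := by
    have : min δ (min ε ρ) ≤ ρ := le_trans (min_le_right _ _) (min_le_right _ _)
    nlinarith [hrpos]
  have hdist : ∀ s ∈ Icc (0:ℝ) r, dist s 0 < ε := by
    intro s hs
    rw [Real.dist_eq, sub_zero, abs_of_nonneg hs.1]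
    exact lt_of_le_of_lt hs.2 hrε
  have hderiv : ∀ s ∈ Ioo (0:ℝ) r, 0 < deriv G s := by
    intro s hs
    have hs0 : s ≠ 0 := ne_of_gt hs.1
    have hd : dist s 0 < δ := by
      rw [Real.dist_eq, sub_zero, abs_of_pos hs.1]; exact lt_trans hs.2 hrδ
    have hq' := hball hd hs0
    have hpos : 0 < G' s := by
      have := mul_pos hq' hs.1
      rwa [div_mul_cancel₀ _ hs0] at this
    rw [(hball2 (hdist s ⟨le_of_lt hs.1, le_of_lt hs.2⟩)).deriv]
    exact hpos
  have hcont : ContinuousOn G (Icc 0 r) := fun s hs =>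
    ((hball2 (hdist s hs)).differentiableAt.continuousAt).continuousWithinAt
  have hmono := strictMonoOn_of_deriv_pos (convex_Icc 0 r) hcont
    (fun s hs => hderiv s (by rwa [interior_Icc] at hs))
  have hlt : G 0 < G r :=
    hmono (left_mem_Icc.2 (le_of_lt hrpos)) (right_mem_Icc.2 (le_of_lt hrpos)) hrpos
  have : G r ≤ G 0 := hball3 (by rw [Real.dist_eq, sub_zero, abs_of_pos hrpos]; exact hrρ)
  linarith

/-- The Euclidean Laplacian of `f` at `x`: the sum of the second derivatives of `f`
in the coordinate directions. -/
noncomputable def lap {n : ℕ} (f : EuclideanSpace ℝ (Fin n) → ℝ)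
    (x : EuclideanSpace ℝ (Fin n)) : ℝ :=
  ∑ i : Fin n, iteratedFDeriv ℝ 2 f x ![EuclideanSpace.single i 1, EuclideanSpace.single i 1]

set_option maxHeartbeats 1000000 in
/-- Lemma 2.2: local persistence estimate for nonnegative solutions of the heat equation
on `B₂(0) × [0,1]` whose height grows at most polynomially in `1/t` on `B₁(0)`. -/
theorem heat_flow_local_bound_poly (n : ℕ) (hn : 1 ≤ n) (p : ℝ) (hp : 1 ≤ p) :
    ∃ M c : ℝ, 0 < M ∧ 0 < c ∧
      ∀ f : EuclideanSpace ℝ (Fin n) → ℝ → ℝ,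
        ContDiffOn ℝ (⊤ : ℕ∞) (fun q : EuclideanSpace ℝ (Fin n) × ℝ => f q.1 q.2)
          (ball (0 : EuclideanSpace ℝ (Fin n)) 2 ×ˢ Icc (0:ℝ) 1) →
        (∀ x ∈ ball (0 : EuclideanSpace ℝ (Fin n)) 2, ∀ t ∈ Icc (0:ℝ) 1,
          derivWithin (fun s => f x s) (Icc (0:ℝ) 1) t = lap (fun y => f y t) x) →
        (∀ x ∈ ball (0 : EuclideanSpace ℝ (Fin n)) 2, ∀ t ∈ Icc (0:ℝ) 1, 0 ≤ f x t) →
        (∀ x ∈ ball (0 : EuclideanSpace ℝ (Fin n)) 1, ∀ t ∈ Icc (0:ℝ) 1, t ^ p * f x t ≤ 1) →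
        (∀ x ∈ closedBall (0 : EuclideanSpace ℝ (Fin n)) 1,
          (f x 0 + 1) ^ (1/p) * (1 - ‖x‖^2)^2 ≤ 2) →
        ∀ x ∈ closedBall (0 : EuclideanSpace ℝ (Fin n)) 1, ∀ t ∈ Icc (0:ℝ) 1,
          (f x t + 1) ^ (1/p) * ((1 - ‖x‖^2)^2 - M * t) ≤ c := by
  refine ⟨32*(p+1)+8*(n:ℝ)+1, 64*(p+1)+2, by positivity, by positivity, ?_⟩
  set M : ℝ := 32*(p+1)+8*(n:ℝ)+1 with hMdef
  set c : ℝ := 64*(p+1)+2 with hcdef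
  have hppos : 0 < p := lt_of_lt_of_le one_pos hp
  have hMpos : 0 < M := by rw [hMdef]; positivity
  have hc2 : (2:ℝ) ≤ c := by rw [hcdef]; nlinarith
  intro f hsm hheat hpos hpoly hinit
  set K : Set (EuclideanSpace ℝ (Fin n) × ℝ) :=
    closedBall (0 : EuclideanSpace ℝ (Fin n)) 1 ×ˢ Icc (0:ℝ) 1 with hKdef
  have hsub : K ⊆ ball (0 : EuclideanSpace ℝ (Fin n)) 2 ×ˢ Icc (0:ℝ) 1 :=
    Set.prod_mono (closedBall_subset_ball (by norm_num)) subset_rfl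
  set g : EuclideanSpace ℝ (Fin n) × ℝ → ℝ :=
    fun q => (f q.1 q.2 + 1) ^ (1/p) * ((1 - ‖q.1‖^2)^2 - M * q.2) with hgdef
  have hK : IsCompact K := (isCompact_closedBall _ _).prod isCompact_Icc
  have hgc : ContinuousOn g K := by
    apply ContinuousOn.mul
    · apply ContinuousOn.rpow_const
      · exact ((hsm.continuousOn.mono hsub).add continuousOn_const)
      · intro q _; right; positivity
    · fun_prop
  obtain ⟨z₀, hz₀K, hmax⟩ := hK.exists_isMaxOn
    ⟨(0, 0), by constructor <;> simp⟩ hgc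
  suffices hgz : g z₀ ≤ c by
    intro x hx t ht
    exact le_trans (hmax (Set.mk_mem_prod hx ht)) hgz
  by_contra hcon
  push_neg at hcon
  obtain ⟨x₀, t₀⟩ := z₀
  have hx₀ : x₀ ∈ closedBall (0 : EuclideanSpace ℝ (Fin n)) 1 := hz₀K.1
  have ht₀ : t₀ ∈ Icc (0:ℝ) 1 := hz₀K.2
  have hx₀2 : x₀ ∈ ball (0 : EuclideanSpace ℝ (Fin n)) 2 :=
    closedBall_subset_ball (by norm_num) hx₀
  have hx₀n : ‖x₀‖ ≤ 1 := mem_closedBall_zero_iff.1 hx₀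
  set w : ℝ := f x₀ t₀ + 1 with hwdef
  have hw1 : 1 ≤ w := by
    have := hpos x₀ hx₀2 t₀ ht₀; rw [hwdef]; linarith
  have hw0 : 0 < w := lt_of_lt_of_le one_pos hw1
  set u : ℝ := w ^ (1/p) with hudef
  have hu1 : 1 ≤ u := Real.one_le_rpow hw1 (by positivity)
  have hu0 : 0 < u := lt_of_lt_of_le one_pos hu1
  set φ₀ : ℝ := (1 - ‖x₀‖^2)^2 - M * t₀ with hφdef
  have hgz₀ : g (x₀, t₀) = u * φ₀ := rfl
  have hcpos : (0:ℝ) < c := by linarith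
  have hφ₀pos : 0 < φ₀ := by
    by_contra h
    push_neg at h
    have : g (x₀, t₀) ≤ 0 := by
      rw [hgz₀]; exact mul_nonpos_of_nonneg_of_nonpos (le_of_lt hu0) h
    linarith
  have hx₀lt : ‖x₀‖ < 1 := by
    rcases lt_or_eq_of_le hx₀n with h | h
    · exact h
    · exfalso
      have : φ₀ = - (M * t₀) := by rw [hφdef, h]; ring
      have hMt : 0 ≤ M * t₀ := mul_nonneg (le_of_lt hMpos) ht₀.1
      linarith
  have ht₀pos : 0 < t₀ := by
    rcases lt_or_eq_of_le ht₀.1 with h | h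
    · exact h
    · exfalso
      have h0 : g (x₀, t₀) = (f x₀ 0 + 1) ^ (1/p) * (1 - ‖x₀‖^2)^2 := by
        rw [hgdef]; simp [← h]
      have := hinit x₀ hx₀
      rw [h0] at hcon
      linarith
  set R₀ : ℝ := 1 - ‖x₀‖^2 with hRdef
  have hR₀pos : 0 < R₀ := by
    have : ‖x₀‖^2 < 1 := by nlinarith [norm_nonneg x₀]
    rw [hRdef]; linarith
  have hR₀le : R₀ ≤ 1 := by
    have : 0 ≤ ‖x₀‖^2 := sq_nonneg _
    rw [hRdef]; linarith
  by_cases hcase : φ₀ ≤ 32*(p+1)*t₀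
  · -- Case B : the polynomial bound kills it
    have hx₀b1 : x₀ ∈ ball (0 : EuclideanSpace ℝ (Fin n)) 1 := mem_ball_zero_iff.2 hx₀lt
    have hfb := hpoly x₀ hx₀b1 t₀ ht₀
    have htp : (0:ℝ) < t₀ ^ p := Real.rpow_pos_of_pos ht₀pos p
    have hfle : f x₀ t₀ ≤ t₀ ^ (-p) := by
      rw [Real.rpow_neg ht₀.1, ← mul_le_mul_iff_right₀ htp, mul_inv_cancel₀ (ne_of_gt htp)]
      exact hfb
    have htpinv : (1:ℝ) ≤ t₀ ^ (-p) := by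
      calc (1:ℝ) = t₀ ^ (0:ℝ) := (Real.rpow_zero t₀).symm
      _ ≤ t₀ ^ (-p) := Real.rpow_le_rpow_of_exponent_ge ht₀pos ht₀.2 (by linarith)
    have hwle : w ≤ 2 * t₀ ^ (-p) := by rw [hwdef]; linarith
    have hule : u ≤ 2 / t₀ := by
      have h1 : u ≤ (2 * t₀ ^ (-p)) ^ (1/p) :=
        Real.rpow_le_rpow (by linarith) hwle (by positivity)
      have h2 : (2 * t₀ ^ (-p)) ^ (1/p) = 2 ^ (1/p) * t₀⁻¹ := by
        rw [Real.mul_rpow (by norm_num) (by positivity),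
          ← Real.rpow_mul ht₀.1 (-p) (1/p),
          show -p*(1/p) = -1 by field_simp, Real.rpow_neg_one]
      have h3 : (2:ℝ) ^ (1/p) ≤ 2 := by
        calc (2:ℝ) ^ (1/p) ≤ 2 ^ (1:ℝ) :=
              Real.rpow_le_rpow_of_exponent_le (by norm_num)
                ((div_le_one hppos).2 hp)
        _ = 2 := Real.rpow_one 2
      have h4 : (0:ℝ) < t₀⁻¹ := by positivity
      rw [h2] at h1
      calc u ≤ 2 ^ (1/p) * t₀⁻¹ := h1
      _ ≤ 2 * t₀⁻¹ := by nlinarith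
      _ = 2 / t₀ := by ring
    have : g (x₀, t₀) ≤ c := by
      rw [hgz₀]
      have h1 : u * φ₀ ≤ u * (32*(p+1)*t₀) := by
        apply mul_le_mul_of_nonneg_left hcase (le_of_lt hu0)
      have h2 : u * (32*(p+1)*t₀) ≤ (2/t₀) * (32*(p+1)*t₀) := by
        apply mul_le_mul_of_nonneg_right hule (by positivity)
      have h3 : (2/t₀) * (32*(p+1)*t₀) = 64*(p+1) := by
        field_simp; ring
      rw [hcdef]; rw [h3] at h2; linarith
    linarith
  · -- Case A : maximum principle computation
    push_neg at hcase
    have hp0 : p ≠ 0 := ne_of_gt hppos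
    -- slice smoothness
    have hslice_t : ContDiffOn ℝ (⊤ : ℕ∞) (fun t => f x₀ t) (Icc (0:ℝ) 1) := by
      have heq : (fun t => f x₀ t)
          = (fun q : EuclideanSpace ℝ (Fin n) × ℝ => f q.1 q.2) ∘ (fun t => (x₀, t)) := rfl
      rw [heq]
      exact hsm.comp ((contDiff_const.prodMk contDiff_id).contDiffOn)
        (fun t htt => ⟨hx₀2, htt⟩)
    have hslice_x : ∀ y ∈ ball (0:EuclideanSpace ℝ (Fin n)) 2,
        ContDiffAt ℝ (⊤ : ℕ∞) (fun z => f z t₀) y := by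
      intro y hy
      have hcd : ContDiffOn ℝ (⊤ : ℕ∞) (fun z => f z t₀)
          (ball (0:EuclideanSpace ℝ (Fin n)) 2) := by
        have heq : (fun z => f z t₀)
            = (fun q : EuclideanSpace ℝ (Fin n) × ℝ => f q.1 q.2) ∘ (fun z => (z, t₀)) := rfl
        rw [heq]
        exact hsm.comp ((contDiff_id.prodMk contDiff_const).contDiffOn)
          (fun z hz => ⟨hz, ht₀⟩)
      exact hcd.contDiffAt (isOpen_ball.mem_nhds hy)
    -- time derivative inequality
    set τ : ℝ := derivWithin (fun s => f x₀ s) (Icc (0:ℝ) 1) t₀ with hτdef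
    have hfd : HasDerivWithinAt (fun s => f x₀ s) τ (Icc (0:ℝ) 1) t₀ :=
      ((hslice_t.differentiableOn (by simp)) t₀ ht₀).hasDerivWithinAt
    have hTd : HasDerivWithinAt
        (fun t => (f x₀ t + 1) ^ (1/p) * ((1 - ‖x₀‖^2)^2 - M * t))
        ((τ * (1/p) * w ^ (1/p - 1)) * φ₀ + u * (0 - M * 1)) (Icc (0:ℝ) 1) t₀ := by
      have h1 : HasDerivWithinAt (fun t => (f x₀ t + 1)) τ (Icc (0:ℝ) 1) t₀ :=
        hfd.add_const 1
      have h2 := h1.rpow_const (p := 1/p) (Or.inl (ne_of_gt hw0))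
      have h3 : HasDerivWithinAt (fun t : ℝ => (1 - ‖x₀‖^2)^2 - M * t) (0 - M * 1)
          (Icc (0:ℝ) 1) t₀ :=
        (hasDerivWithinAt_const _ _ _).sub ((hasDerivWithinAt_id t₀ _).const_mul M)
      exact h2.mul h3
    have hmaxT : IsLocalMaxOn
        (fun t => (f x₀ t + 1) ^ (1/p) * ((1 - ‖x₀‖^2)^2 - M * t)) (Icc (0:ℝ) 1) t₀ := by
      have hmo : IsMaxOn
          (fun t => (f x₀ t + 1) ^ (1/p) * ((1 - ‖x₀‖^2)^2 - M * t)) (Icc (0:ℝ) 1) t₀ :=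
        fun t htt => hmax (Set.mk_mem_prod hx₀ htt)
      exact hmo.filter_mono inf_le_right
    have hcone : -t₀ ∈ posTangentConeAt (Icc (0:ℝ) 1) t₀ := by
      apply mem_posTangentConeAt_of_segment_subset
      have heq : t₀ + -t₀ = 0 := by ring
      rw [heq, segment_symm, segment_eq_Icc ht₀.1]
      exact Icc_subset_Icc le_rfl ht₀.2
    have hT0 := hmaxT.hasFDerivWithinAt_nonpos hTd.hasFDerivWithinAt hcone
    have hIneq1 : 0 ≤ (τ * (1/p) * w ^ (1/p - 1)) * φ₀ - u * M := by
      simp only [ContinuousLinearMap.toSpanSingleton_apply, ContinuousLinearMap.one_apply,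
        smul_eq_mul] at hT0
      nlinarith [hT0, ht₀pos]
    -- spatial derivative information in each coordinate direction
    have hkey : ∀ i : Fin n, ∃ b : ℝ,
        w ^ (1/p - 1) * b * φ₀ = 4 * p * u * (x₀ i) * R₀ ∧
        (1 - p) * w ^ (1/p - 1 - 1) * b^2 * φ₀
          + p * w ^ (1/p - 1) * (iteratedFDeriv ℝ 2 (fun y => f y t₀) x₀
              ![EuclideanSpace.single i 1, EuclideanSpace.single i 1]) * φ₀
          - 8 * p * w ^ (1/p - 1) * b * (x₀ i) * R₀
          + p^2 * u * (8 * (x₀ i)^2 - 4 * R₀) ≤ 0 := by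
      intro i
      set e : EuclideanSpace ℝ (Fin n) := EuclideanSpace.single i (1:ℝ) with hedef
      have hen : ‖e‖ = 1 := by rw [hedef]; simp
      set L : ℝ → EuclideanSpace ℝ (Fin n) := fun s => x₀ + s • e with hLdef
      have hL0 : L 0 = x₀ := by rw [hLdef]; simp
      have hLnorm : ∀ s : ℝ, ‖L s‖ ≤ ‖x₀‖ + |s| := by
        intro s
        calc ‖L s‖ ≤ ‖x₀‖ + ‖s • e‖ := norm_add_le _ _
        _ = ‖x₀‖ + |s| := by rw [norm_smul, hen]; simp
      have hNorm : ∀ s : ℝ, ‖L s‖^2 = ‖x₀‖^2 + 2*(x₀ i)*s + s^2 := by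
        intro s
        rw [hLdef]
        simp only []
        rw [norm_add_sq_real, real_inner_smul_right, norm_smul, hen]
        have hie : (inner ℝ x₀ e : ℝ) = x₀ i := by
          rw [hedef, EuclideanSpace.inner_single_right]
          simp
        rw [hie]
        simp only [Real.norm_eq_abs, mul_one]
        rw [sq_abs]
        ring
      have hLmem2 : ∀ᶠ s in nhds (0:ℝ), L s ∈ ball (0:EuclideanSpace ℝ (Fin n)) 2 := by
        filter_upwards [Metric.ball_mem_nhds (0:ℝ) one_pos] with s hs
        rw [mem_ball_zero_iff]
        have h1 := hLnorm s
        have h2 : |s| < 1 := by simpa [Real.dist_eq] using hs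
        linarith
      have hLd : ∀ s : ℝ, HasDerivAt L e s := by
        intro s
        rw [hLdef]
        simpa using ((hasDerivAt_id s).smul_const e).const_add x₀
      have hb0 : ∀ᶠ s in nhds (0:ℝ), 0 ≤ f (L s) t₀ := by
        filter_upwards [hLmem2] with s hs
        exact hpos (L s) hs t₀ ht₀
      have hhd : ∀ᶠ s in nhds (0:ℝ), HasDerivAt (fun σ => f (L σ) t₀)
          (fderiv ℝ (fun y => f y t₀) (L s) e) s := by
        filter_upwards [hLmem2] with s hs
        exact (((hslice_x (L s) hs).differentiableAt (by simp)).hasFDerivAt).comp_hasDerivAt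
          s (hLd s)
      set b : ℝ := fderiv ℝ (fun y => f y t₀) x₀ e with hbdef
      set qi : ℝ := fderiv ℝ (fderiv ℝ (fun y => f y t₀)) x₀ e e with hqdef
      have hiter : iteratedFDeriv ℝ 2 (fun y => f y t₀) x₀ ![e, e] = qi := by
        rw [iteratedFDeriv_two_apply]
        simp [hqdef]
      have hdh : HasDerivAt (fun s => fderiv ℝ (fun y => f y t₀) (L s) e) qi 0 := by
        have h1 : DifferentiableAt ℝ (fderiv ℝ (fun y => f y t₀)) x₀ := by
          have h0 := (hslice_x x₀ hx₀2).fderiv_right (m := 1) (by exact WithTop.coe_le_coe.mpr (le_top : (((1 + 1 : ℕ)) : ℕ∞) ≤ ⊤))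
          exact h0.differentiableAt one_ne_zero
        have h3 := h1.hasFDerivAt
        rw [← hL0] at h3
        have h2 := h3.comp_hasDerivAt 0 (hLd 0)
        have h4 := ((ContinuousLinearMap.apply ℝ ℝ e).hasFDerivAt).comp_hasDerivAt 0 h2
        rw [hL0] at h4
        exact h4
      have hdhd' : HasDerivAt (fun σ => f (L σ) t₀) b 0 := by
        have h0 := hhd.self_of_nhds
        rw [hL0] at h0
        exact h0
      -- the polynomial giving the weight along the line
      set P : ℝ → ℝ := fun s => 1 - ‖x₀‖^2 - 2*(x₀ i)*s - s^2 with hPdef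
      have hPs : ∀ s : ℝ, 1 - ‖L s‖^2 = P s := by
        intro s
        rw [hNorm s, hPdef]
        ring
      have hP0 : P 0 = R₀ := by rw [hPdef, hRdef]; ring
      have hPd : ∀ s : ℝ, HasDerivAt P (-(2*(x₀ i)) - 2*s) s := by
        intro s
        rw [hPdef]
        have hcomb := ((hasDerivAt_const s ((1:ℝ) - ‖x₀‖^2)).sub
          ((hasDerivAt_id s).const_mul (2*(x₀ i)))).sub (hasDerivAt_pow 2 s)
        refine hcomb.congr_deriv ?_
        push_cast
        ring
      have hΦd : ∀ s : ℝ, HasDerivAt (fun σ => (P σ)^2 - M*t₀)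
          (2*P s*(-(2*(x₀ i)) - 2*s)) s := by
        intro s
        have hcomb := ((hPd s).pow 2).sub_const (M*t₀)
        refine hcomb.congr_deriv ?_
        push_cast
        ring
      set G : ℝ → ℝ := fun s => (f (L s) t₀ + 1) ^ (1/p) * ((P s)^2 - M*t₀) with hGdef
      have hGeq : ∀ s : ℝ, G s = g (L s, t₀) := by
        intro s
        show (f (L s) t₀ + 1) ^ (1/p) * ((P s)^2 - M*t₀)
          = (f (L s) t₀ + 1) ^ (1/p) * ((1 - ‖L s‖^2)^2 - M*t₀)
        rw [hPs s]
      have hmaxG : IsLocalMax G 0 := by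
        have hnb : ∀ᶠ s in nhds (0:ℝ), |s| ≤ 1 - ‖x₀‖ := by
          filter_upwards [Metric.closedBall_mem_nhds (0:ℝ)
            (by linarith : (0:ℝ) < 1 - ‖x₀‖)] with s hs
          simpa [Real.dist_eq] using hs
        filter_upwards [hnb] with s hs
        have hmem : (L s, t₀) ∈ K := by
          constructor
          · rw [mem_closedBall_zero_iff]
            have := hLnorm s
            linarith
          · exact ht₀
        calc G s = g (L s, t₀) := hGeq s
        _ ≤ g (x₀, t₀) := hmax hmem
        _ = G 0 := by rw [hGeq 0, hL0]
      set dG : ℝ → ℝ := fun s =>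
        (fderiv ℝ (fun y => f y t₀) (L s) e * (1/p) * (f (L s) t₀ + 1) ^ (1/p - 1))
            * ((P s)^2 - M*t₀)
          + (f (L s) t₀ + 1) ^ (1/p) * (2*P s*(-(2*(x₀ i)) - 2*s)) with hdGdef
      have hGd : ∀ᶠ s in nhds (0:ℝ), HasDerivAt G (dG s) s := by
        filter_upwards [hhd, hb0] with s hs hfs
        have hne : f (L s) t₀ + 1 ≠ 0 := by positivity
        exact ((hs.add_const 1).rpow_const (Or.inl hne)).mul (hΦd s)
      -- second derivative of G at 0
      have hU1d : HasDerivAt (fun s => (f (L s) t₀ + 1) ^ (1/p - 1))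
          (b * (1/p - 1) * w ^ (1/p - 1 - 1)) 0 := by
        have h0 := (hdhd'.add_const 1).rpow_const (p := 1/p - 1) (Or.inl (ne_of_gt ?_))
        · rw [hL0] at h0
          exact h0
        · rw [hL0]
          exact hw0
      have hCd : HasDerivAt (fun s => (f (L s) t₀ + 1) ^ (1/p))
          (b * (1/p) * w ^ (1/p - 1)) 0 := by
        have h0 := (hdhd'.add_const 1).rpow_const (p := 1/p) (Or.inl (ne_of_gt ?_))
        · rw [hL0] at h0
          exact h0
        · rw [hL0]
          exact hw0
      have hAd : HasDerivAt
          (fun s => fderiv ℝ (fun y => f y t₀) (L s) e * (1/p)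
            * (f (L s) t₀ + 1) ^ (1/p - 1))
          ((qi * (1/p)) * w ^ (1/p - 1)
            + (b * (1/p)) * (b * (1/p - 1) * w ^ (1/p - 1 - 1))) 0 := by
        have h0 := (hdh.mul_const (1/p)).mul hU1d
        rw [hL0] at h0
        exact h0
      have hD2d : HasDerivAt (fun s : ℝ => -(2*(x₀ i)) - 2*s) (-2) 0 := by
        have hcomb := (hasDerivAt_const (0:ℝ) (-(2*(x₀ i)))).sub
          ((hasDerivAt_id (0:ℝ)).const_mul 2)
        refine hcomb.congr_deriv ?_
        ring
      have hDd : HasDerivAt (fun s => 2*P s*(-(2*(x₀ i)) - 2*s))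
          ((2*(-(2*(x₀ i)) - 2*0)) * (-(2*(x₀ i)) - 2*0) + (2*P 0) * (-2)) 0 := by
        have h1 : HasDerivAt (fun s => 2*P s) (2*(-(2*(x₀ i)) - 2*0)) 0 :=
          (hPd 0).const_mul 2
        exact h1.mul hD2d
      have hdGd : HasDerivAt dG
          (((qi * (1/p)) * w ^ (1/p - 1)
              + (b * (1/p)) * (b * (1/p - 1) * w ^ (1/p - 1 - 1))) * ((P 0)^2 - M*t₀)
            + (b * (1/p) * w ^ (1/p - 1)) * (2*P 0*(-(2*(x₀ i)) - 2*0))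
            + ((b * (1/p) * w ^ (1/p - 1)) * (2*P 0*(-(2*(x₀ i)) - 2*0))
              + w ^ (1/p)
                * ((2*(-(2*(x₀ i)) - 2*0)) * (-(2*(x₀ i)) - 2*0) + (2*P 0) * (-2)))) 0 := by
        have h1 := (hAd.mul (hΦd 0)).add (hCd.mul hDd)
        rw [hL0] at h1
        refine h1.congr_deriv ?_
        all_goals ring
      obtain ⟨hzero, hneg⟩ := second_deriv_test hGd hdGd hmaxG
      rw [hdGdef] at hzero
      simp only [] at hzero
      rw [hL0, hP0, ← hbdef, ← hwdef] at hzero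
      rw [hP0] at hneg
      have hφR : φ₀ = R₀^2 - M*t₀ := by rw [hφdef, hRdef]
      refine ⟨b, ?_, ?_⟩
      · rw [hudef, hφR]
        linear_combination (norm := (field_simp; ring1)) p * hzero
      · rw [hiter, hudef, hφR]
        have hgoal_eq : (1 - p) * w ^ (1/p - 1 - 1) * b^2 * (R₀^2 - M*t₀)
              + p * w ^ (1/p - 1) * qi * (R₀^2 - M*t₀)
              - 8 * p * w ^ (1/p - 1) * b * (x₀ i) * R₀
              + p^2 * w ^ (1/p) * (8 * (x₀ i)^2 - 4 * R₀)
            = p^2 * (((qi * (1/p)) * w ^ (1/p - 1)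
              + (b * (1/p)) * (b * (1/p - 1) * w ^ (1/p - 1 - 1))) * (R₀^2 - M*t₀)
            + (b * (1/p) * w ^ (1/p - 1)) * (2*R₀*(-(2*(x₀ i)) - 2*0))
            + ((b * (1/p) * w ^ (1/p - 1)) * (2*R₀*(-(2*(x₀ i)) - 2*0))
              + w ^ (1/p)
                * ((2*(-(2*(x₀ i)) - 2*0)) * (-(2*(x₀ i)) - 2*0) + (2*R₀) * (-2)))) := by
          field_simp
          ring
        rw [hgoal_eq]
        nlinarith [hneg, sq_nonneg p]
    choose B hB1 hB2 using hkey
    have hA2pos : 0 < w ^ (1/p - 1 - 1) := Real.rpow_pos_of_pos hw0 _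
    have hA1w : w ^ (1/p - 1) = w ^ (1/p - 1 - 1) * w := by
      rw [← Real.rpow_add_one (ne_of_gt hw0) (1/p - 1 - 1)]
      congr 1
      ring
    have huw : u = w ^ (1/p - 1 - 1) * w^2 := by
      have h2 : w ^ (1/p) = w ^ (1/p - 1) * w := by
        rw [← Real.rpow_add_one (ne_of_gt hw0) (1/p - 1)]
        congr 1
        ring
      rw [hudef, h2, hA1w]
      ring
    set A2 : ℝ := w ^ (1/p - 1 - 1) with hA2def
    clear_value A2 M c w u φ₀ R₀ τ
    have hE1 : ∀ i, B i * φ₀ = 4 * p * w * (x₀ i) * R₀ := by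
      intro i
      have h1 := hB1 i
      rw [hA1w, huw] at h1
      have h2 : A2 * (w * (B i * φ₀)) = A2 * (w * (4 * p * w * (x₀ i) * R₀)) := by
        linear_combination h1
      have h3 := mul_left_cancel₀ (ne_of_gt hA2pos) h2
      exact mul_left_cancel₀ (ne_of_gt hw0) h3
    have hE2 : ∀ i, (1 - p) * (B i)^2 * φ₀
        + p * w * (iteratedFDeriv ℝ 2 (fun y => f y t₀) x₀
            ![EuclideanSpace.single i 1, EuclideanSpace.single i 1]) * φ₀
        - 8 * p * w * (B i) * (x₀ i) * R₀
        + p^2 * w^2 * (8 * (x₀ i)^2 - 4 * R₀) ≤ 0 := by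
      intro i
      have h1 := hB2 i
      rw [hA1w, huw] at h1
      have h2 : A2 * ((1 - p) * (B i)^2 * φ₀
          + p * w * (iteratedFDeriv ℝ 2 (fun y => f y t₀) x₀
            ![EuclideanSpace.single i 1, EuclideanSpace.single i 1]) * φ₀
          - 8 * p * w * (B i) * (x₀ i) * R₀
          + p^2 * w^2 * (8 * (x₀ i)^2 - 4 * R₀)) ≤ A2 * 0 := by
        rw [mul_zero]
        linarith [h1]
      exact le_of_mul_le_mul_left h2 hA2pos
    have hTi : ∀ i, p * w * (iteratedFDeriv ℝ 2 (fun y => f y t₀) x₀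
            ![EuclideanSpace.single i 1, EuclideanSpace.single i 1]) * φ₀^2
        ≤ 16 * (p - 1) * p^2 * w^2 * (x₀ i)^2 * R₀^2
          + 32 * p^2 * w^2 * (x₀ i)^2 * R₀^2
          - 8 * p^2 * w^2 * (x₀ i)^2 * φ₀
          + 4 * p^2 * w^2 * R₀ * φ₀ := by
      intro i
      have h1 := mul_le_mul_of_nonneg_left (hE2 i) (le_of_lt hφ₀pos)
      rw [mul_zero] at h1
      have hsq : (B i * φ₀)^2 = (4 * p * w * (x₀ i) * R₀)^2 := by rw [hE1 i]
      have hsqp : p * (B i * φ₀)^2 = p * (4 * p * w * (x₀ i) * R₀)^2 := by rw [hE1 i]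
      have hm : (8 * p * w * (x₀ i) * R₀) * (B i * φ₀)
          = (8 * p * w * (x₀ i) * R₀) * (4 * p * w * (x₀ i) * R₀) := by rw [hE1 i]
      linarith [h1, hsq, hsqp, hm]
    have hX : ∑ i : Fin n, (x₀ i)^2 = ‖x₀‖^2 := by
      rw [EuclideanSpace.norm_eq, Real.sq_sqrt (by positivity)]
      exact Finset.sum_congr rfl (fun i _ => by rw [Real.norm_eq_abs, sq_abs])
    have hτsum : τ = ∑ i : Fin n, iteratedFDeriv ℝ 2 (fun y => f y t₀) x₀
        ![EuclideanSpace.single i 1, EuclideanSpace.single i 1] := by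
      rw [hτdef, hheat x₀ hx₀2 t₀ ht₀]
      rfl
    have hSum : p * w * τ * φ₀^2
        ≤ 16 * (p - 1) * p^2 * w^2 * ‖x₀‖^2 * R₀^2
          + 32 * p^2 * w^2 * ‖x₀‖^2 * R₀^2
          - 8 * p^2 * w^2 * ‖x₀‖^2 * φ₀
          + (n:ℝ) * (4 * p^2 * w^2 * R₀ * φ₀) := by
      have h1 := Finset.sum_le_sum (fun i (_ : i ∈ Finset.univ) => hTi i)
      have hL : ∑ i : Fin n, p * w * (iteratedFDeriv ℝ 2 (fun y => f y t₀) x₀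
            ![EuclideanSpace.single i 1, EuclideanSpace.single i 1]) * φ₀^2
          = p * w * τ * φ₀^2 := by
        rw [hτsum, Finset.mul_sum, Finset.sum_mul]
      have hR : ∑ i : Fin n, (16 * (p - 1) * p^2 * w^2 * (x₀ i)^2 * R₀^2
            + 32 * p^2 * w^2 * (x₀ i)^2 * R₀^2
            - 8 * p^2 * w^2 * (x₀ i)^2 * φ₀
            + 4 * p^2 * w^2 * R₀ * φ₀)
          = 16 * (p - 1) * p^2 * w^2 * ‖x₀‖^2 * R₀^2
            + 32 * p^2 * w^2 * ‖x₀‖^2 * R₀^2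
            - 8 * p^2 * w^2 * ‖x₀‖^2 * φ₀
            + (n:ℝ) * (4 * p^2 * w^2 * R₀ * φ₀) := by
        have heach : ∀ i : Fin n, 16 * (p - 1) * p^2 * w^2 * (x₀ i)^2 * R₀^2
            + 32 * p^2 * w^2 * (x₀ i)^2 * R₀^2
            - 8 * p^2 * w^2 * (x₀ i)^2 * φ₀
            + 4 * p^2 * w^2 * R₀ * φ₀
            = (16 * (p - 1) * p^2 * w^2 * R₀^2 + 32 * p^2 * w^2 * R₀^2
                - 8 * p^2 * w^2 * φ₀) * (x₀ i)^2 + 4 * p^2 * w^2 * R₀ * φ₀ :=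
          fun i => by ring
        rw [Finset.sum_congr rfl (fun i _ => heach i), Finset.sum_add_distrib,
          ← Finset.mul_sum, Finset.sum_const, Finset.card_univ, Fintype.card_fin,
          hX, nsmul_eq_mul]
        ring
      rw [hL, hR] at h1
      exact h1
    have hIneq1p : p * w^2 * M ≤ w * τ * φ₀ := by
      have h0 : 0 ≤ p * ((τ * (1/p) * w ^ (1/p - 1)) * φ₀ - u * M) :=
        mul_nonneg (le_of_lt hppos) hIneq1
      have heq : p * ((τ * (1/p) * w ^ (1/p - 1)) * φ₀ - u * M)
          = A2 * (w * τ * φ₀ - p * w^2 * M) := by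
        rw [hA1w, huw]
        field_simp
      rw [heq] at h0
      have h0' : A2 * 0 ≤ A2 * (w * τ * φ₀ - p * w^2 * M) := by
        rw [mul_zero]; exact h0
      have h1 := le_of_mul_le_mul_left h0' hA2pos
      linarith
    have hmain : p^2 * w^2 * M * φ₀
        ≤ 16 * (p - 1) * p^2 * w^2 * ‖x₀‖^2 * R₀^2
          + 32 * p^2 * w^2 * ‖x₀‖^2 * R₀^2
          - 8 * p^2 * w^2 * ‖x₀‖^2 * φ₀
          + (n:ℝ) * (4 * p^2 * w^2 * R₀ * φ₀) := by
      have h1 := mul_le_mul_of_nonneg_left hIneq1p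
        (le_of_lt (mul_pos hppos hφ₀pos))
      linarith [h1, hSum]
    have hXle : ‖x₀‖^2 ≤ 1 := by
      calc ‖x₀‖^2 ≤ 1^2 := pow_le_pow_left₀ (norm_nonneg x₀) hx₀n 2
      _ = 1 := one_pow 2
    have hXnn : 0 ≤ ‖x₀‖^2 := sq_nonneg _
    have hRsq : R₀^2 = φ₀ + M * t₀ := by rw [hφdef, hRdef]; ring
    have hRsqp : p * R₀^2 = p * (φ₀ + M * t₀) := by rw [hRsq]
    have hpw2 : (0:ℝ) < p^2 * w^2 := by positivity
    have hnn : (0:ℝ) ≤ (n:ℝ) := Nat.cast_nonneg n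
    have hstep1 : M * φ₀ ≤ 16 * (p - 1) * ‖x₀‖^2 * R₀^2 + 32 * ‖x₀‖^2 * R₀^2
        - 8 * ‖x₀‖^2 * φ₀ + (n:ℝ) * (4 * R₀ * φ₀) := by
      by_contra hcontra
      push_neg at hcontra
      linarith [hmain, mul_lt_mul_of_pos_left hcontra hpw2]
    have h_a : 0 ≤ (16 * p + 16) * R₀^2 * (1 - ‖x₀‖^2) :=
      mul_nonneg (mul_nonneg (by linarith) (sq_nonneg R₀)) (by linarith)
    have h_b : 0 ≤ 8 * ‖x₀‖^2 * φ₀ := by positivity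
    have h_c : 0 ≤ 4 * (n:ℝ) * (1 - R₀) * φ₀ := by
      apply mul_nonneg _ (le_of_lt hφ₀pos)
      apply mul_nonneg (by positivity) (by linarith)
    have hstep2 : M * φ₀ ≤ (16 * p + 16) * (φ₀ + M * t₀) + 4 * (n:ℝ) * φ₀ := by
      linarith [hstep1, h_a, h_b, h_c, hRsq, hRsqp]
    have hstep3 : (16 * p + 16) * (M * t₀) ≤ M * φ₀ / 2 := by
      have h1 := mul_le_mul_of_nonneg_left (le_of_lt hcase) (le_of_lt hMpos)
      linarith [h1]
    have hstep4 : M * φ₀ ≤ (16 * p + 16) * φ₀ + M * φ₀ / 2 + 4 * (n:ℝ) * φ₀ := by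
      linarith [hstep2, hstep3]
    have hstep5 : M ≤ 32 * p + 32 + 8 * (n:ℝ) := by
      by_contra hcontra
      push_neg at hcontra
      linarith [hstep4,
        mul_pos (show (0:ℝ) < M/2 - 16*p - 16 - 4*(n:ℝ) by linarith) hφ₀pos]
    rw [hMdef] at hstep5
    linarith
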